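/- arXiv:1906.03127 — 6 statements merged into one kernel-verified Lean document; each statement's English description precedes it below -/
import Mathlib

section
/- Let n ≥ 1 and let α⁺, α⁻ : ℝⁿ → ℝⁿ × ℝⁿ be C² maps satisfying the Lagrangian condition ω(∂α⁺/∂uᵢ(u), ∂α⁺/∂uⱼ(u)) = 0 and ω(∂α⁻/∂vᵢ(v), ∂α⁻/∂vⱼ(v)) = 0 for all indices i, j and all points u, v ∈ ℝⁿ. Define x(u,v) = ½(α⁺(u) + α⁻(v)), y(u,v) = ½(α⁺(u) − α⁻(v)), and the functions λᵢ(u,v) = ω(∂x/∂uᵢ(u,v), y(u,v)) and μⱼ(u,v) = ω(∂x/∂vⱼ(u,v), y(u,v)). Then for all (u,v) ∈ ℝⁿ × ℝⁿ and all indices i, j one has ∂λᵢ/∂uⱼ = ∂λⱼ/∂uᵢ, ∂μᵢ/∂vⱼ = ∂μⱼ/∂vᵢ, and ∂λᵢ/∂vⱼ = ∂μⱼ/∂uᵢ; that is, the 1-form Σᵢ λᵢ duᵢ + Σⱼ μⱼ dvⱼ is closed, which is the condition for local existence of a function f with ∂f/∂uᵢ = ω(∂x/∂uᵢ, y) and ∂f/∂vⱼ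 = ω(∂x/∂vⱼ, y). -/
/-!
For a direction `a` of `ℝⁿ × ℝⁿ` write `λ_a(q) = ω(Dx(q) a, y(q))`. Symmetry of the second
derivative of `x` cancels the second-order terms, so
`∂_b λ_a − ∂_a λ_b = ω(Dx a, Dy b) − ω(Dx b, Dy a)`. As `x` and `y` are half the sum and half
the difference of `α⁺(u)` and `α⁻(v)`, antisymmetry of `ω` turns this into
`½ (ω(Dα⁺ a₁, Dα⁺ b₁) − ω(Dα⁻ a₂, Dα⁻ b₂))`, and both terms vanish on coordinate directions:
by the Lagrangian conditions, or because one argument is zero.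
-/

open scoped BigOperators

/-- The canonical symplectic form on `ℝⁿ × ℝⁿ`:
`ω((a,b),(c,d)) = ⟨a,d⟩ − ⟨b,c⟩`. -/
noncomputable def symp (n : ℕ) (a b : (Fin n → ℝ) × (Fin n → ℝ)) : ℝ :=
  (∑ i, a.1 i * b.2 i) - (∑ i, a.2 i * b.1 i)

section PairingWithDerivative

variable {𝕜 : Type*} [RCLike 𝕜]
  {E F F' G : Type*} [NormedAddCommGroup E] [NormedSpace 𝕜 E] [NormedAddCommGroup F]
  [NormedSpace 𝕜 F] [NormedAddCommGroup F'] [NormedSpace 𝕜 F'] [NormedAddCommGroup G]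
  [NormedSpace 𝕜 G] {x : E → F} {y : E → F'} {q : E}

theorem fderiv_bilinear_fderiv_apply (B : F →L[𝕜] F' →L[𝕜] G)
    (hx : DifferentiableAt 𝕜 (fderiv 𝕜 x) q) (hy : DifferentiableAt 𝕜 y q) (a b : E) :
    fderiv 𝕜 (fun p => B (fderiv 𝕜 x p a) (y p)) q b =
      B (fderiv 𝕜 (fderiv 𝕜 x) q b a) (y q) + B (fderiv 𝕜 x q a) (fderiv 𝕜 y q b) := by
  have hxa : DifferentiableAt 𝕜 (fun p => fderiv 𝕜 x p a) q :=
    hx.clm_apply (differentiableAt_const a)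
  rw [B.fderiv_of_bilinear hxa hy, fderiv_clm_apply hx (differentiableAt_const a)]
  simp [add_comm]

theorem fderiv_bilinear_fderiv_apply_sub_swap (B : F →L[𝕜] F' →L[𝕜] G)
    (hx : ContDiffAt 𝕜 2 x q) (hy : DifferentiableAt 𝕜 y q) (a b : E) :
    fderiv 𝕜 (fun p => B (fderiv 𝕜 x p a) (y p)) q b -
        fderiv 𝕜 (fun p => B (fderiv 𝕜 x p b) (y p)) q a =
      B (fderiv 𝕜 x q a) (fderiv 𝕜 y q b) - B (fderiv 𝕜 x q b) (fderiv 𝕜 y q a) := by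
  have hx' : DifferentiableAt 𝕜 (fderiv 𝕜 x) q :=
    (hx.fderiv_right (m := 1) (by norm_num)).differentiableAt one_ne_zero
  rw [fderiv_bilinear_fderiv_apply B hx' hy, fderiv_bilinear_fderiv_apply B hx' hy,
    hx.isSymmSndFDerivAt (by simp [minSmoothness_of_isRCLikeNormedField]) b a]
  abel

end PairingWithDerivative

section CenterChord

variable {𝕜 : Type*} [RCLike 𝕜]
  {E₁ E₂ F G : Type*} [NormedAddCommGroup E₁] [NormedSpace 𝕜 E₁] [NormedAddCommGroup E₂]
  [NormedSpace 𝕜 E₂] [NormedAddCommGroup F] [NormedSpace 𝕜 F] [NormedAddCommGroup G]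
  [NormedSpace 𝕜 G] {B : F →L[𝕜] F →L[𝕜] G}

theorem half_add_half_sub_sub_swap (hB : ∀ p q, B p q = -B q p) (p q m r : F) :
    B ((1 / 2 : 𝕜) • (p + m)) ((1 / 2 : 𝕜) • (q - r)) -
        B ((1 / 2 : 𝕜) • (q + r)) ((1 / 2 : 𝕜) • (p - m)) =
      (1 / 2 : 𝕜) • (B p q - B m r) := by
  simp only [map_smul, map_add, map_sub, add_apply, FunLike.coe_smul, Pi.smul_apply]
  rw [hB q p, hB r p, hB q m, hB r m]
  module

theorem fderiv_bilinear_fderiv_apply_sub_swap_of_centerChord (hB : ∀ p q, B p q = -B q p)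
    {α₁ : E₁ → F} {α₂ : E₂ → F} {u : E₁} {v : E₂}
    (h₁ : ContDiffAt 𝕜 2 α₁ u) (h₂ : ContDiffAt 𝕜 2 α₂ v) {x y : E₁ × E₂ → F}
    (hx : x = fun q => (1 / 2 : 𝕜) • (α₁ q.1 + α₂ q.2))
    (hy : y = fun q => (1 / 2 : 𝕜) • (α₁ q.1 - α₂ q.2)) (a b : E₁ × E₂) :
    fderiv 𝕜 (fun p => B (fderiv 𝕜 x p a) (y p)) (u, v) b -
        fderiv 𝕜 (fun p => B (fderiv 𝕜 x p b) (y p)) (u, v) a =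
      (1 / 2 : 𝕜) • (B (fderiv 𝕜 α₁ u a.1) (fderiv 𝕜 α₁ u b.1) -
        B (fderiv 𝕜 α₂ v a.2) (fderiv 𝕜 α₂ v b.2)) := by
  have hd₁ : HasFDerivAt (fun q : E₁ × E₂ => α₁ q.1)
      ((fderiv 𝕜 α₁ u).comp (ContinuousLinearMap.fst 𝕜 E₁ E₂)) (u, v) :=
    (h₁.differentiableAt two_ne_zero).hasFDerivAt.comp (u, v) hasFDerivAt_fst
  have hd₂ : HasFDerivAt (fun q : E₁ × E₂ => α₂ q.2)
      ((fderiv 𝕜 α₂ v).comp (ContinuousLinearMap.snd 𝕜 E₁ E₂)) (u, v) :=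
    (h₂.differentiableAt two_ne_zero).hasFDerivAt.comp (u, v) hasFDerivAt_snd
  have hDx : ∀ w, fderiv 𝕜 x (u, v) w =
      (1 / 2 : 𝕜) • (fderiv 𝕜 α₁ u w.1 + fderiv 𝕜 α₂ v w.2) := by
    intro w
    rw [hx, ((hd₁.fun_add hd₂).fun_const_smul _).fderiv]
    simp
  have hDy : ∀ w, fderiv 𝕜 y (u, v) w =
      (1 / 2 : 𝕜) • (fderiv 𝕜 α₁ u w.1 - fderiv 𝕜 α₂ v w.2) := by
    intro w
    rw [hy, ((hd₁.fun_sub hd₂).fun_const_smul _).fderiv]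
    simp
  have hxC2 : ContDiffAt 𝕜 2 x (u, v) := by
    rw [hx]
    exact ((h₁.comp (u, v) contDiffAt_fst).add (h₂.comp (u, v) contDiffAt_snd)).const_smul _
  have hyD : DifferentiableAt 𝕜 y (u, v) := by
    rw [hy]
    exact ((hd₁.fun_sub hd₂).fun_const_smul _).differentiableAt
  rw [fderiv_bilinear_fderiv_apply_sub_swap B hxC2 hyD, hDx, hDx, hDy, hDy,
    half_add_half_sub_sub_swap hB]

end CenterChord

theorem symp_eq_dotProduct (n : ℕ) (a b : (Fin n → ℝ) × (Fin n → ℝ)) :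
    symp n a b = a.1 ⬝ᵥ b.2 - a.2 ⬝ᵥ b.1 :=
  rfl

theorem symp_swap (n : ℕ) (a b : (Fin n → ℝ) × (Fin n → ℝ)) :
    symp n a b = -symp n b a := by
  simp only [symp_eq_dotProduct, dotProduct_comm a.1, dotProduct_comm a.2]
  ring

theorem isBilinearMap_symp (n : ℕ) : IsBilinearMap ℝ (symp n) where
  add_left a b c := by
    simp only [symp_eq_dotProduct, Prod.fst_add, Prod.snd_add, add_dotProduct]
    ring
  smul_left r a b := by
    simp only [symp_eq_dotProduct, Prod.smul_fst, Prod.smul_snd, smul_dotProduct, smul_eq_mul]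
    ring
  add_right a b c := by
    simp only [symp_eq_dotProduct, Prod.fst_add, Prod.snd_add, dotProduct_add]
    ring
  smul_right r a b := by
    simp only [symp_eq_dotProduct, Prod.smul_fst, Prod.smul_snd, dotProduct_smul, smul_eq_mul]
    ring

noncomputable def sympL (n : ℕ) :
    ((Fin n → ℝ) × (Fin n → ℝ)) →L[ℝ] ((Fin n → ℝ) × (Fin n → ℝ)) →L[ℝ] ℝ :=
  (isBilinearMap_symp n).toContinuousBilinearMap

@[simp]
theorem sympL_apply (n : ℕ) (a b : (Fin n → ℝ) × (Fin n → ℝ)) :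
    sympL n a b = symp n a b :=
  rfl

theorem stmt0_general (n : ℕ)
    (αp αm : (Fin n → ℝ) → (Fin n → ℝ) × (Fin n → ℝ))
    (hαp : ContDiff ℝ 2 αp) (hαm : ContDiff ℝ 2 αm)
    (hLp : ∀ (u : Fin n → ℝ) (i j : Fin n),
      symp n (fderiv ℝ αp u (Pi.single i 1)) (fderiv ℝ αp u (Pi.single j 1)) = 0)
    (hLm : ∀ (v : Fin n → ℝ) (i j : Fin n),
      symp n (fderiv ℝ αm v (Pi.single i 1)) (fderiv ℝ αm v (Pi.single j 1)) = 0)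
    (x y : (Fin n → ℝ) × (Fin n → ℝ) → (Fin n → ℝ) × (Fin n → ℝ))
    (hx : ∀ u v, x (u, v) = ((1:ℝ)/2) • (αp u + αm v))
    (hy : ∀ u v, y (u, v) = ((1:ℝ)/2) • (αp u - αm v))
    (lam mu : Fin n → ((Fin n → ℝ) × (Fin n → ℝ)) → ℝ)
    (hlam : ∀ (i : Fin n) (u v : Fin n → ℝ),
      lam i (u, v) = symp n (fderiv ℝ x (u, v) (Pi.single i 1, 0)) (y (u, v)))
    (hmu : ∀ (j : Fin n) (u v : Fin n → ℝ),
      mu j (u, v) = symp n (fderiv ℝ x (u, v) (0, Pi.single j 1)) (y (u, v))) :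
    ∀ (u v : Fin n → ℝ) (i j : Fin n),
      fderiv ℝ (lam i) (u, v) (Pi.single j 1, 0) =
        fderiv ℝ (lam j) (u, v) (Pi.single i 1, 0) ∧
      fderiv ℝ (mu i) (u, v) (0, Pi.single j 1) =
        fderiv ℝ (mu j) (u, v) (0, Pi.single i 1) ∧
      fderiv ℝ (lam i) (u, v) (0, Pi.single j 1) =
        fderiv ℝ (mu j) (u, v) (Pi.single i 1, 0) := by
  have hlam' : ∀ i, lam i = fun q => sympL n (fderiv ℝ x q (Pi.single i 1, 0)) (y q) :=
    fun i => funext fun q => hlam i q.1 q.2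
  have hmu' : ∀ j, mu j = fun q => sympL n (fderiv ℝ x q (0, Pi.single j 1)) (y q) :=
    fun j => funext fun q => hmu j q.1 q.2
  have hx' : x = fun q => (1 / 2 : ℝ) • (αp q.1 + αm q.2) := funext (Prod.forall.2 hx)
  have hy' : y = fun q => (1 / 2 : ℝ) • (αp q.1 - αm q.2) := funext (Prod.forall.2 hy)
  intro u v i j
  have closed := fderiv_bilinear_fderiv_apply_sub_swap_of_centerChord (B := sympL n) (symp_swap n)
    (hαp.contDiffAt (x := u)) (hαm.contDiffAt (x := v)) hx' hy'
  refine ⟨?_, ?_, ?_⟩ <;> rw [← sub_eq_zero] <;>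
    simp only [hlam', hmu', closed, map_zero, zero_apply] <;> simp [hLp, hLm]

theorem stmt0 (n : ℕ) (hn : 1 ≤ n)
    (αp αm : (Fin n → ℝ) → (Fin n → ℝ) × (Fin n → ℝ))
    (hαp : ContDiff ℝ 2 αp) (hαm : ContDiff ℝ 2 αm)
    (hLp : ∀ (u : Fin n → ℝ) (i j : Fin n),
      symp n (fderiv ℝ αp u (Pi.single i 1)) (fderiv ℝ αp u (Pi.single j 1)) = 0)
    (hLm : ∀ (v : Fin n → ℝ) (i j : Fin n),
      symp n (fderiv ℝ αm v (Pi.single i 1)) (fderiv ℝ αm v (Pi.single j 1)) = 0)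
    (x y : (Fin n → ℝ) × (Fin n → ℝ) → (Fin n → ℝ) × (Fin n → ℝ))
    (hx : ∀ u v, x (u, v) = ((1:ℝ)/2) • (αp u + αm v))
    (hy : ∀ u v, y (u, v) = ((1:ℝ)/2) • (αp u - αm v))
    (lam mu : Fin n → ((Fin n → ℝ) × (Fin n → ℝ)) → ℝ)
    (hlam : ∀ (i : Fin n) (u v : Fin n → ℝ),
      lam i (u, v) = symp n (fderiv ℝ x (u, v) (Pi.single i 1, 0)) (y (u, v)))
    (hmu : ∀ (j : Fin n) (u v : Fin n → ℝ),
      mu j (u, v) = symp n (fderiv ℝ x (u, v) (0, Pi.single j 1)) (y (u, v))) :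
    ∀ (u v : Fin n → ℝ) (i j : Fin n),
      fderiv ℝ (lam i) (u, v) (Pi.single j 1, 0) =
        fderiv ℝ (lam j) (u, v) (Pi.single i 1, 0) ∧
      fderiv ℝ (mu i) (u, v) (0, Pi.single j 1) =
        fderiv ℝ (mu j) (u, v) (0, Pi.single i 1) ∧
      fderiv ℝ (lam i) (u, v) (0, Pi.single j 1) =
        fderiv ℝ (mu j) (u, v) (Pi.single i 1, 0) :=
  stmt0_general n αp αm hαp hαm hLp hLm x y hx hy lam mu hlam hmu
end

section
/- Let U ⊂ ℂ be open and let γ = (γ₁, γ₂) : U → ℂ² be holomorphic (ℂ-differentiable on U). Regard x(u,v) = (Re γ₁(u+iv), Re γ₂(u+iv)) and y(u,v) = (Im γ₁(u+iv), Im γ₂(u+iv)) as maps into ℝ². Then at every point of U (in real coordinates z = u + iv): ∂/∂v [ω(∂x/∂u, y)] = ∂/∂u [ω(∂x/∂v, y)]; that is, the 1-form ω(x_u, y) du + ω(x_v, y) dv is closed, which is the condition for the local existence of a function f with f_u = ω(x_u, y) and f_v = ω(x_v, y). -/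
/-!
Differentiating the two coefficients and using symmetry of second derivatives,
`∂ᵥ ω(xᵤ, y) - ∂ᵤ ω(xᵥ, y) = ω(xᵤ, yᵥ) - ω(xᵥ, yᵤ)`. By the Cauchy–Riemann equations
`yᵥ = xᵤ` and `yᵤ = -xᵥ`, so this is `ω(xᵤ, xᵤ) + ω(xᵥ, xᵥ) = 0`.
-/

open Complex

/-- The canonical symplectic form on `ℝ²`: `ω((a₁,a₂),(c₁,c₂)) = a₁c₂ − a₂c₁`. -/
def omega2 (a c : ℝ × ℝ) : ℝ := a.1 * c.2 - a.2 * c.1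

lemma omega2_self (a : ℝ × ℝ) : omega2 a a = 0 := by
  rw [omega2, mul_comm, sub_self]

lemma omega2_neg_right (a c : ℝ × ℝ) : omega2 a (-c) = -omega2 a c := by
  simp only [omega2, Prod.fst_neg, Prod.snd_neg]
  ring

section Calculus

variable {E F : Type*} [NormedAddCommGroup E] [NormedSpace ℝ E]
  [NormedAddCommGroup F] [NormedSpace ℝ F] {p : E}

lemma fderiv_omega2_apply {a c : E → ℝ × ℝ} (ha : DifferentiableAt ℝ a p)
    (hc : DifferentiableAt ℝ c p) (w : E) :
    fderiv ℝ (fun q => omega2 (a q) (c q)) p w =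
      omega2 (fderiv ℝ a p w) (c p) + omega2 (a p) (fderiv ℝ c p w) := by
  have hd : HasFDerivAt (fun q => omega2 (a q) (c q)) _ p :=
    (ha.hasFDerivAt.fst.mul hc.hasFDerivAt.snd).sub (ha.hasFDerivAt.snd.mul hc.hasFDerivAt.fst)
  rw [hd.fderiv]
  simp only [omega2, sub_apply, add_apply, smul_apply, smul_eq_mul,
    ContinuousLinearMap.comp_apply, ContinuousLinearMap.coe_fst', ContinuousLinearMap.coe_snd']
  ring

lemma fderiv_clm_apply_const {c : E → E →L[ℝ] F} (hc : DifferentiableAt ℝ c p) (v w : E) :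
    fderiv ℝ (fun q => c q v) p w = fderiv ℝ c p w v := by
  rw [fderiv_clm_apply hc (differentiableAt_const v)]
  simp

end Calculus

theorem fderiv_omega2_fderiv_apply_comm {x y : ℝ × ℝ → ℝ × ℝ} {p : ℝ × ℝ}
    (hx : ContDiffAt ℝ 2 x p) (hy : DifferentiableAt ℝ y p)
    (hyv : fderiv ℝ y p (0, 1) = fderiv ℝ x p (1, 0))
    (hyu : fderiv ℝ y p (1, 0) = -fderiv ℝ x p (0, 1)) :
    fderiv ℝ (fun q => omega2 (fderiv ℝ x q (1, 0)) (y q)) p (0, 1) =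
      fderiv ℝ (fun q => omega2 (fderiv ℝ x q (0, 1)) (y q)) p (1, 0) := by
  have hx' : DifferentiableAt ℝ (fderiv ℝ x) p :=
    (hx.fderiv_right (m := 1) le_rfl).differentiableAt one_ne_zero
  have hxv (v : ℝ × ℝ) : DifferentiableAt ℝ (fun q => fderiv ℝ x q v) p :=
    hx'.clm_apply (differentiableAt_const v)
  rw [fderiv_omega2_apply (hxv _) hy, fderiv_omega2_apply (hxv _) hy,
    fderiv_clm_apply_const hx', fderiv_clm_apply_const hx',
    hx.isSymmSndFDerivAt (by simp) (0, 1) (1, 0), hyv, hyu, omega2_neg_right,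
    omega2_self, omega2_self, neg_zero]

lemma hasFDerivAt_comp_add_mul_I {g : ℂ → ℂ} {g' : ℂ} {p : ℝ × ℝ}
    (hg : HasDerivAt g g' (p.1 + p.2 * I)) :
    HasFDerivAt (fun q : ℝ × ℝ => g (q.1 + q.2 * I))
      (g' • (equivRealProdCLM.symm : ℝ × ℝ →L[ℝ] ℂ)) p := by
  simp only [← equivRealProdCLM_symm_apply] at hg ⊢
  refine ((hg.hasFDerivAt.restrictScalars ℝ).comp p
    equivRealProdCLM.symm.hasFDerivAt).congr_fderiv ?_
  ext <;> simp [mul_comm]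

lemma contDiffAt_comp_add_mul_I {g : ℂ → ℂ} {U : Set ℂ} (hU : IsOpen U)
    (hg : DifferentiableOn ℂ g U) {p : ℝ × ℝ} (hp : (p.1 + p.2 * I : ℂ) ∈ U) (n : WithTop ℕ∞) :
    ContDiffAt ℝ n (fun q : ℝ × ℝ => g (q.1 + q.2 * I)) p := by
  simp only [← equivRealProdCLM_symm_apply] at hp ⊢
  exact ((hg.contDiffOn hU).contDiffAt (hU.mem_nhds hp)).restrict_scalars ℝ
    |>.comp p equivRealProdCLM.symm.contDiff.contDiffAt

section CauchyRiemann

variable {g : ℂ → ℂ} {g' : ℂ} {p : ℝ × ℝ}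

lemma fderiv_re_comp_add_mul_I (hg : HasDerivAt g g' (p.1 + p.2 * I)) (w : ℝ × ℝ) :
    fderiv ℝ (fun q : ℝ × ℝ => (g (q.1 + q.2 * I)).re) p w = (g' * (w.1 + w.2 * I)).re := by
  have hd : HasFDerivAt (fun q : ℝ × ℝ => (g (q.1 + q.2 * I)).re) _ p :=
    reCLM.hasFDerivAt.comp p (hasFDerivAt_comp_add_mul_I hg)
  rw [hd.fderiv]
  simp

lemma fderiv_im_comp_add_mul_I (hg : HasDerivAt g g' (p.1 + p.2 * I)) (w : ℝ × ℝ) :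
    fderiv ℝ (fun q : ℝ × ℝ => (g (q.1 + q.2 * I)).im) p w = (g' * (w.1 + w.2 * I)).im := by
  have hd : HasFDerivAt (fun q : ℝ × ℝ => (g (q.1 + q.2 * I)).im) _ p :=
    imCLM.hasFDerivAt.comp p (hasFDerivAt_comp_add_mul_I hg)
  rw [hd.fderiv]
  simp

variable (hg : DifferentiableAt ℂ g (p.1 + p.2 * I))
include hg

lemma fderiv_im_comp_add_mul_I_apply_zero_one :
    fderiv ℝ (fun q : ℝ × ℝ => (g (q.1 + q.2 * I)).im) p (0, 1) =
      fderiv ℝ (fun q : ℝ × ℝ => (g (q.1 + q.2 * I)).re) p (1, 0) := by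
  simp [fderiv_im_comp_add_mul_I hg.hasDerivAt, fderiv_re_comp_add_mul_I hg.hasDerivAt]

lemma fderiv_im_comp_add_mul_I_apply_one_zero :
    fderiv ℝ (fun q : ℝ × ℝ => (g (q.1 + q.2 * I)).im) p (1, 0) =
      -fderiv ℝ (fun q : ℝ × ℝ => (g (q.1 + q.2 * I)).re) p (0, 1) := by
  simp [fderiv_im_comp_add_mul_I hg.hasDerivAt, fderiv_re_comp_add_mul_I hg.hasDerivAt]

end CauchyRiemann

theorem stmt3 (U : Set ℂ) (hU : IsOpen U) (γ₁ γ₂ : ℂ → ℂ)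
    (hγ₁ : ∀ z ∈ U, DifferentiableAt ℂ γ₁ z)
    (hγ₂ : ∀ z ∈ U, DifferentiableAt ℂ γ₂ z)
    (x y : ℝ × ℝ → ℝ × ℝ)
    (hx : ∀ p : ℝ × ℝ,
      x p = ((γ₁ (p.1 + p.2 * Complex.I)).re, (γ₂ (p.1 + p.2 * Complex.I)).re))
    (hy : ∀ p : ℝ × ℝ,
      y p = ((γ₁ (p.1 + p.2 * Complex.I)).im, (γ₂ (p.1 + p.2 * Complex.I)).im)) :
    ∀ u v : ℝ, (u + v * Complex.I) ∈ U →
      fderiv ℝ (fun p : ℝ × ℝ => omega2 (fderiv ℝ x p (1, 0)) (y p)) (u, v) (0, 1) =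
      fderiv ℝ (fun p : ℝ × ℝ => omega2 (fderiv ℝ x p (0, 1)) (y p)) (u, v) (1, 0) := by
  intro u v huv
  obtain rfl : x = _ := funext hx
  obtain rfl : y = _ := funext hy
  have hsmooth {g : ℂ → ℂ} (hg : ∀ z ∈ U, DifferentiableAt ℂ g z) :
      ContDiffAt ℝ 2 (fun q : ℝ × ℝ => g (q.1 + q.2 * I)) (u, v) :=
    contDiffAt_comp_add_mul_I hU (fun z hz => (hg z hz).differentiableWithinAt) huv 2
  have hre {g : ℂ → ℂ} (hg : ∀ z ∈ U, DifferentiableAt ℂ g z) :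
      ContDiffAt ℝ 2 (fun q : ℝ × ℝ => (g (q.1 + q.2 * I)).re) (u, v) :=
    reCLM.contDiff.contDiffAt.comp _ (hsmooth hg)
  have him {g : ℂ → ℂ} (hg : ∀ z ∈ U, DifferentiableAt ℂ g z) :
      DifferentiableAt ℝ (fun q : ℝ × ℝ => (g (q.1 + q.2 * I)).im) (u, v) :=
    (imCLM.contDiff.contDiffAt.comp _ (hsmooth hg)).differentiableAt two_ne_zero
  have hx_fderiv := ((hre hγ₁).differentiableAt two_ne_zero).fderiv_prodMk
    ((hre hγ₂).differentiableAt two_ne_zero)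
  have hy_fderiv := (him hγ₁).fderiv_prodMk (him hγ₂)
  apply fderiv_omega2_fderiv_apply_comm ((hre hγ₁).prodMk (hre hγ₂)) ((him hγ₁).prodMk (him hγ₂))
  · rw [hx_fderiv, hy_fderiv]
    simp only [ContinuousLinearMap.prod_apply,
      fderiv_im_comp_add_mul_I_apply_zero_one (p := (u, v)) (hγ₁ _ huv),
      fderiv_im_comp_add_mul_I_apply_zero_one (p := (u, v)) (hγ₂ _ huv)]
  · rw [hx_fderiv, hy_fderiv]
    simp only [ContinuousLinearMap.prod_apply, Prod.neg_mk,
      fderiv_im_comp_add_mul_I_apply_one_zero (p := (u, v)) (hγ₁ _ huv),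
      fderiv_im_comp_add_mul_I_apply_one_zero (p := (u, v)) (hγ₂ _ huv)]
end

section
/- Let S⁺, S⁻ : ℝ → ℝ be C² functions. Define x(u,v) = (½(u+v), ½(S⁺'(u) + S⁻'(v))), g(u,v) = (½(S⁺'(u) − S⁻'(v)), −½(u−v)), and f(u,v) = ½S⁺(u) − ½S⁻(v) − ¼(u−v)(S⁺'(u) + S⁻'(v)). Then for all (u,v) ∈ ℝ²: (i) ∂f/∂u = ⟨g, ∂x/∂u⟩ and ∂f/∂v = ⟨g, ∂x/∂v⟩ (Euclidean inner product on ℝ²); and (ii) the Jacobian determinants satisfy det D g(u,v) = − det D x(u,v). (Consequently, wherever x is a local diffeomorphism, the function F = f ∘ x⁻¹ has gradient ∇F = g ∘ x⁻¹ and Hessian determinant det D²F = −1, i.e. it is a solution of the non-convex Monge–Ampère equation.) -/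
/-!
With `α⁺(u) = (u, S⁺'(u))` and `α⁻(v) = (v, S⁻'(v))`, the map `x` is `(α⁺ + α⁻) / 2` and `g` is
`J (α⁺ - α⁻) / 2` for the rotation `J (a, b) = (b, -a)`. Hence the columns of `D x` are
`α⁺' / 2, α⁻' / 2` and those of `D g` are `J α⁺' / 2, -J α⁻' / 2`; as `J` preserves determinants,
flipping the sign of one column gives `det D g = -det D x`. The relations `∂f = ⟨g, ∂x⟩` are a
direct computation of the partial derivatives.
-/

/-- Jacobian determinant of a map `ℝ² → ℝ²`. -/
noncomputable def jdet (F : ℝ × ℝ → ℝ × ℝ) (p : ℝ × ℝ) : ℝ :=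
  (fderiv ℝ F p (1, 0)).1 * (fderiv ℝ F p (0, 1)).2 -
    (fderiv ℝ F p (1, 0)).2 * (fderiv ℝ F p (0, 1)).1

theorem HasFDerivAt.div_const {𝕜 E : Type*} [NontriviallyNormedField 𝕜] [NormedAddCommGroup E]
    [NormedSpace 𝕜 E] {f : E → 𝕜} {f' : E →L[𝕜] 𝕜} {x : E} (h : HasFDerivAt f f' x) (c : 𝕜) :
    HasFDerivAt (fun y => f y / c) (c⁻¹ • f') x := by
  simpa only [div_eq_mul_inv] using h.mul_const c⁻¹

section ProdCoord

variable {𝕜 : Type*} [NontriviallyNormedField 𝕜] {φ : 𝕜 → 𝕜} {φ' u v : 𝕜}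

theorem HasDerivAt.comp_fst (h : HasDerivAt φ φ' u) (v : 𝕜) :
    HasFDerivAt (fun p : 𝕜 × 𝕜 => φ p.1) (φ' • ContinuousLinearMap.fst 𝕜 𝕜 𝕜) (u, v) :=
  h.comp_hasFDerivAt (f := Prod.fst) (u, v) hasFDerivAt_fst

theorem HasDerivAt.comp_snd (h : HasDerivAt φ φ' v) (u : 𝕜) :
    HasFDerivAt (fun p : 𝕜 × 𝕜 => φ p.2) (φ' • ContinuousLinearMap.snd 𝕜 𝕜 𝕜) (u, v) :=
  h.comp_hasFDerivAt (f := Prod.snd) (u, v) hasFDerivAt_snd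

end ProdCoord

noncomputable def chordMidpoint (φ ψ : ℝ → ℝ) (p : ℝ × ℝ) : ℝ × ℝ :=
  ((p.1 + p.2) / 2, (φ p.1 + ψ p.2) / 2)

noncomputable def rotatedHalfChord (φ ψ : ℝ → ℝ) (p : ℝ × ℝ) : ℝ × ℝ :=
  ((φ p.1 - ψ p.2) / 2, -((p.1 - p.2) / 2))

noncomputable def chordArea (Sp Sm : ℝ → ℝ) (p : ℝ × ℝ) : ℝ :=
  Sp p.1 / 2 - Sm p.2 / 2 - (p.1 - p.2) * (deriv Sp p.1 + deriv Sm p.2) / 4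

section Partials

variable {φ ψ : ℝ → ℝ} {φ' ψ' u v : ℝ}

theorem chordMidpoint_partials (hφ : HasDerivAt φ φ' u) (hψ : HasDerivAt ψ ψ' v) :
    fderiv ℝ (chordMidpoint φ ψ) (u, v) (1, 0) = (1 / 2, φ' / 2) ∧
      fderiv ℝ (chordMidpoint φ ψ) (u, v) (0, 1) = (1 / 2, ψ' / 2) := by
  have h : HasFDerivAt (chordMidpoint φ ψ) _ (u, v) :=
    ((hasFDerivAt_fst.add hasFDerivAt_snd).div_const 2).prodMk
      (((hφ.comp_fst v).add (hψ.comp_snd u)).div_const 2)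
  simp [h.fderiv, div_eq_inv_mul]

theorem rotatedHalfChord_partials (hφ : HasDerivAt φ φ' u) (hψ : HasDerivAt ψ ψ' v) :
    fderiv ℝ (rotatedHalfChord φ ψ) (u, v) (1, 0) = (φ' / 2, -(1 / 2)) ∧
      fderiv ℝ (rotatedHalfChord φ ψ) (u, v) (0, 1) = (-(ψ' / 2), 1 / 2) := by
  have h : HasFDerivAt (rotatedHalfChord φ ψ) _ (u, v) :=
    (((hφ.comp_fst v).sub (hψ.comp_snd u)).div_const 2).prodMk
      ((hasFDerivAt_fst.sub hasFDerivAt_snd).div_const 2).neg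
  simp [h.fderiv, div_eq_inv_mul]

theorem chordArea_partials {Sp Sm : ℝ → ℝ} (hSp : DifferentiableAt ℝ Sp u)
    (hSm : DifferentiableAt ℝ Sm v) (hφ : HasDerivAt (deriv Sp) φ' u)
    (hψ : HasDerivAt (deriv Sm) ψ' v) :
    fderiv ℝ (chordArea Sp Sm) (u, v) (1, 0) = (deriv Sp u - deriv Sm v) / 4 - (u - v) * φ' / 4 ∧
      fderiv ℝ (chordArea Sp Sm) (u, v) (0, 1) =
        (deriv Sp u - deriv Sm v) / 4 - (u - v) * ψ' / 4 := by
  have h : HasFDerivAt (chordArea Sp Sm) _ (u, v) :=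
    (((hSp.hasDerivAt.comp_fst v).div_const 2).sub ((hSm.hasDerivAt.comp_snd u).div_const 2)).sub
      (((hasFDerivAt_fst.sub hasFDerivAt_snd).mul
        ((hφ.comp_fst v).add (hψ.comp_snd u))).div_const 4)
  simp only [h.fderiv, smul_add, Pi.add_apply, sub_apply, smul_apply,
    ContinuousLinearMap.coe_fst', smul_eq_mul, mul_one, ContinuousLinearMap.coe_snd', mul_zero,
    sub_zero, add_apply, add_zero, zero_sub, zero_add, mul_neg, neg_add_rev]
  constructor <;> ring

end Partials

theorem stmt4 (Sp Sm : ℝ → ℝ) (hSp : ContDiff ℝ 2 Sp) (hSm : ContDiff ℝ 2 Sm)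
    (x g : ℝ × ℝ → ℝ × ℝ) (f : ℝ × ℝ → ℝ)
    (hx : ∀ u v : ℝ, x (u, v) = ((u + v) / 2, (deriv Sp u + deriv Sm v) / 2))
    (hg : ∀ u v : ℝ, g (u, v) = ((deriv Sp u - deriv Sm v) / 2, -((u - v) / 2)))
    (hf : ∀ u v : ℝ, f (u, v) =
      Sp u / 2 - Sm v / 2 - (u - v) * (deriv Sp u + deriv Sm v) / 4) :
    ∀ u v : ℝ,
      fderiv ℝ f (u, v) (1, 0) =
        (g (u, v)).1 * (fderiv ℝ x (u, v) (1, 0)).1 +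
          (g (u, v)).2 * (fderiv ℝ x (u, v) (1, 0)).2 ∧
      fderiv ℝ f (u, v) (0, 1) =
        (g (u, v)).1 * (fderiv ℝ x (u, v) (0, 1)).1 +
          (g (u, v)).2 * (fderiv ℝ x (u, v) (0, 1)).2 ∧
      jdet g (u, v) = -jdet x (u, v) := by
  obtain rfl : x = chordMidpoint (deriv Sp) (deriv Sm) := funext fun p => hx p.1 p.2
  obtain rfl : g = rotatedHalfChord (deriv Sp) (deriv Sm) := funext fun p => hg p.1 p.2
  obtain rfl : f = chordArea Sp Sm := funext fun p => hf p.1 p.2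
  intro u v
  have hφ := (hSp.differentiable_deriv_two u).hasDerivAt
  have hψ := (hSm.differentiable_deriv_two v).hasDerivAt
  obtain ⟨hxu, hxv⟩ := chordMidpoint_partials hφ hψ
  obtain ⟨hgu, hgv⟩ := rotatedHalfChord_partials hφ hψ
  obtain ⟨hfu, hfv⟩ := chordArea_partials (hSp.differentiable two_ne_zero u)
    (hSm.differentiable two_ne_zero v) hφ hψ
  simp only [jdet, rotatedHalfChord, hxu, hxv, hgu, hgv, hfu, hfv]
  exact ⟨by ring, by ring, by ring⟩
end

section
/- Let Q : ℝ² → ℝ be a C² harmonic function of (s,t), i.e. ∂²Q/∂s² + ∂²Q/∂t² = 0 everywhere. Define x(s,t) = (s, ∂Q/∂t(s,t)), g(s,t) = (∂Q/∂s(s,t), −t), and f(s,t) = Q(s,t) − t ∂Q/∂t(s,t). Then for all (s,t) ∈ ℝ²: (i) ∂f/∂s = ⟨g, ∂x/∂s⟩ and ∂f/∂t = ⟨g, ∂x/∂t⟩ (Euclidean inner product on ℝ²); and (ii) the Jacobian determinants satisfy det D g(s,t) = det D x(s,t). (Consequently, wherever x is a local diffeomorphism, F = f ∘ x⁻¹ has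 gradient ∇F = g ∘ x⁻¹ and Hessian determinant det D²F = 1, i.e. it solves the convex Monge–Ampère equation.) -/
/-!
Write `Q_s, Q_t` for the partial derivatives. By the product rule
`df = dQ - Q_t dt - t dQ_t`, so `f_s = Q_s - t ∂_s Q_t = ⟨g, x_s⟩` and
`f_t = -t ∂_t Q_t = ⟨g, x_t⟩` (the two `Q_t` terms cancel). The Jacobians are triangular:
`det D x = ∂_t Q_t` and `det D g = -∂_s Q_s`, and these agree because `Q` is harmonic.
-/

section

variable {E F : Type*} [NormedAddCommGroup E] [NormedSpace ℝ E]
  [NormedAddCommGroup F] [NormedSpace ℝ F]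

theorem ContDiff.differentiable_fderiv_apply {Q : E → F} (hQ : ContDiff ℝ 2 Q) (v : E) :
    Differentiable ℝ fun p => fderiv ℝ Q p v :=
  ((hQ.fderiv_right (m := 1) (by norm_num)).differentiable one_ne_zero).clm_apply
    (differentiable_const v)

end

section

variable {φ ψ : ℝ × ℝ → ℝ} {p : ℝ × ℝ}

theorem fderiv_fst_prodMk_apply (hφ : DifferentiableAt ℝ φ p) (v : ℝ × ℝ) :
    fderiv ℝ (fun q => (q.1, φ q)) p v = (v.1, fderiv ℝ φ p v) := by
  rw [differentiableAt_fst.fderiv_prodMk hφ, fderiv_fst]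
  rfl

theorem fderiv_prodMk_neg_snd_apply (hφ : DifferentiableAt ℝ φ p) (v : ℝ × ℝ) :
    fderiv ℝ (fun q => (φ q, -q.2)) p v = (fderiv ℝ φ p v, -v.2) := by
  rw [hφ.fderiv_prodMk differentiableAt_snd.fun_neg, fderiv_fun_neg, fderiv_snd]
  rfl

theorem jdet_fst_prodMk (hφ : DifferentiableAt ℝ φ p) :
    jdet (fun q => (q.1, φ q)) p = fderiv ℝ φ p (0, 1) := by
  simp [jdet, fderiv_fst_prodMk_apply hφ]

theorem jdet_prodMk_neg_snd (hφ : DifferentiableAt ℝ φ p) :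
    jdet (fun q => (φ q, -q.2)) p = -fderiv ℝ φ p (1, 0) := by
  simp [jdet, fderiv_prodMk_neg_snd_apply hφ]

theorem fderiv_sub_snd_mul_apply (hφ : DifferentiableAt ℝ φ p) (hψ : DifferentiableAt ℝ ψ p)
    (v : ℝ × ℝ) :
    fderiv ℝ (fun q => φ q - q.2 * ψ q) p v =
      fderiv ℝ φ p v - (p.2 * fderiv ℝ ψ p v + ψ p * v.2) := by
  rw [fderiv_fun_sub hφ (differentiableAt_snd.fun_mul hψ), fderiv_fun_mul differentiableAt_snd hψ,
    fderiv_snd]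
  rfl

end

theorem stmt5 (Q : ℝ × ℝ → ℝ) (hQ : ContDiff ℝ 2 Q)
    (Qs Qt : ℝ × ℝ → ℝ)
    (hQs : ∀ p : ℝ × ℝ, Qs p = fderiv ℝ Q p (1, 0))
    (hQt : ∀ p : ℝ × ℝ, Qt p = fderiv ℝ Q p (0, 1))
    (harm : ∀ p : ℝ × ℝ, fderiv ℝ Qs p (1, 0) + fderiv ℝ Qt p (0, 1) = 0)
    (x g : ℝ × ℝ → ℝ × ℝ) (f : ℝ × ℝ → ℝ)
    (hx : ∀ s t : ℝ, x (s, t) = (s, Qt (s, t)))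
    (hg : ∀ s t : ℝ, g (s, t) = (Qs (s, t), -t))
    (hf : ∀ s t : ℝ, f (s, t) = Q (s, t) - t * Qt (s, t)) :
    ∀ s t : ℝ,
      fderiv ℝ f (s, t) (1, 0) =
        (g (s, t)).1 * (fderiv ℝ x (s, t) (1, 0)).1 +
          (g (s, t)).2 * (fderiv ℝ x (s, t) (1, 0)).2 ∧
      fderiv ℝ f (s, t) (0, 1) =
        (g (s, t)).1 * (fderiv ℝ x (s, t) (0, 1)).1 +
          (g (s, t)).2 * (fderiv ℝ x (s, t) (0, 1)).2 ∧
      jdet g (s, t) = jdet x (s, t) := by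
  obtain rfl : x = fun q => (q.1, Qt q) := funext fun q => hx q.1 q.2
  obtain rfl : g = fun q => (Qs q, -q.2) := funext fun q => hg q.1 q.2
  obtain rfl : f = fun q => Q q - q.2 * Qt q := funext fun q => hf q.1 q.2
  intro s t
  have dQ := hQ.differentiable (by norm_num) (s, t)
  have dQs : DifferentiableAt ℝ Qs (s, t) :=
    (funext hQs ▸ hQ.differentiable_fderiv_apply (1, 0)) (s, t)
  have dQt : DifferentiableAt ℝ Qt (s, t) :=
    (funext hQt ▸ hQ.differentiable_fderiv_apply (0, 1)) (s, t)
  refine ⟨?_, ?_, ?_⟩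
  · rw [fderiv_sub_snd_mul_apply dQ dQt, fderiv_fst_prodMk_apply dQt, ← hQs]
    ring
  · rw [fderiv_sub_snd_mul_apply dQ dQt, fderiv_fst_prodMk_apply dQt, ← hQt]
    ring
  · rw [jdet_prodMk_neg_snd dQs, jdet_fst_prodMk dQt]
    linarith [harm (s, t)]
end

section
/- Let a, b, c, d be real numbers satisfying 3b²c² − 4db³ − 4ac³ − a²d² + 6abcd = 0. Then ac − b² ≤ 0 and bd − c² ≤ 0. -/
lemma aux12 (a b c d : ℝ)
    (h : 3 * b ^ 2 * c ^ 2 - 4 * d * b ^ 3 - 4 * a * c ^ 3 - a ^ 2 * d ^ 2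
        + 6 * a * b * c * d = 0) :
    a * c - b ^ 2 ≤ 0 := by
  by_contra h1
  push_neg at h1
  have key : (a*d - b*c)^2 = 4*((a*c - b^2)*(b*d - c^2)) := by linear_combination -h
  have e3 : (a*(b*d - c^2) + c*(a*c - b^2))^2
      = 4*b^2*((a*c - b^2)*(b*d - c^2)) := by linear_combination b^2 * key
  have hge : (a*c - b^2)*(b*d - c^2) ≥ 0 := by nlinarith [sq_nonneg (a*d - b*c)]
  have hle : (a*c - b^2)*(b*d - c^2) ≤ 0 := by
    nlinarith [sq_nonneg (a*(b*d - c^2) - c*(a*c - b^2)), h1,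
      mul_pos h1 h1]
  have hz : (a*c - b^2)*(b*d - c^2) = 0 := le_antisymm hle hge
  have hd2 : b*d - c^2 = 0 := by
    rcases mul_eq_zero.mp hz with h' | h'
    · exact absurd h' (ne_of_gt h1)
    · exact h'
  have ht : a*d - b*c = 0 := by
    have : (a*d - b*c)^2 = 0 := by rw [key, hz]; ring
    exact pow_eq_zero_iff (by norm_num) |>.mp this
  have hc : c = 0 := by
    have e1 : c*(a*c - b^2) = b*(a*d - b*c) - a*(b*d - c^2) := by ring
    rw [ht, hd2] at e1
    have : c*(a*c - b^2) = 0 := by linarith [e1]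
    rcases mul_eq_zero.mp this with h' | h'
    · exact h'
    · exact absurd h' (ne_of_gt h1)
  rw [hc] at h1
  nlinarith [sq_nonneg b]

theorem stmt12 (a b c d : ℝ)
    (h : 3 * b ^ 2 * c ^ 2 - 4 * d * b ^ 3 - 4 * a * c ^ 3 - a ^ 2 * d ^ 2
        + 6 * a * b * c * d = 0) :
    a * c - b ^ 2 ≤ 0 ∧ b * d - c ^ 2 ≤ 0 := by
  refine ⟨aux12 a b c d h, ?_⟩
  have h' : 3 * c ^ 2 * b ^ 2 - 4 * a * c ^ 3 - 4 * d * b ^ 3 - d ^ 2 * a ^ 2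
      + 6 * d * c * b * a = 0 := by linarith [h]; 
  have := aux12 d c b a (by linear_combination h)
  linarith [this]
end

section
/- Let α(u) = (cos u, sin u) parametrize the unit circle in ℝ², and define x(u,v) = ½(α(u) + α(v)), y(u,v) = ½(α(u) − α(v)), and f(u,v) = ¼(v − u + sin(u − v)). Then for all (u,v) ∈ ℝ²: (i) x(u,v) = cos((u−v)/2) · (cos((u+v)/2), sin((u+v)/2)); (ii) y(u,v) = sin((u−v)/2) · (−sin((u+v)/2), cos((u+v)/2)); (iii) ∂f/∂u(u,v) = ω(∂x/∂u(u,v), y(u,v)) and ∂f/∂v(u,v) = ω(∂x/∂v(u,v), y(u,v)). -/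
open Real

theorem omega2_smul_left (r : ℝ) (a c : ℝ × ℝ) : omega2 (r • a) c = r * omega2 a c := by
  simp only [omega2, Prod.smul_fst, Prod.smul_snd, smul_eq_mul]; ring

theorem omega2_smul_right (r : ℝ) (a c : ℝ × ℝ) : omega2 a (r • c) = r * omega2 a c := by
  simp only [omega2, Prod.smul_fst, Prod.smul_snd, smul_eq_mul]; ring

theorem omega2_tangent_chord (a b c : ℝ) :
    omega2 (-sin a, cos a) ((cos b, sin b) - (cos c, sin c)) = cos (a - c) - cos (a - b) := by
  simp only [omega2, Prod.fst_sub, Prod.snd_sub, cos_sub]; ring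

theorem half_smul_add_cos_sin (u v : ℝ) :
    (1 / 2 : ℝ) • ((cos u, sin u) + (cos v, sin v)) =
      cos ((u - v) / 2) • (cos ((u + v) / 2), sin ((u + v) / 2)) := by
  ext
  · simp only [Prod.smul_fst, Prod.fst_add, smul_eq_mul, cos_add_cos]; ring
  · simp only [Prod.smul_snd, Prod.snd_add, smul_eq_mul, sin_add_sin]; ring

theorem half_smul_sub_cos_sin (u v : ℝ) :
    (1 / 2 : ℝ) • ((cos u, sin u) - (cos v, sin v)) =
      sin ((u - v) / 2) • (-sin ((u + v) / 2), cos ((u + v) / 2)) := by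
  ext
  · simp only [Prod.smul_fst, Prod.fst_sub, smul_eq_mul, cos_sub_cos]; ring
  · simp only [Prod.smul_snd, Prod.snd_sub, smul_eq_mul, sin_sub_sin]; ring

theorem hasDerivAt_cos_sin (t : ℝ) : HasDerivAt (fun s => (cos s, sin s)) (-sin t, cos t) t :=
  (hasDerivAt_cos t).prodMk (hasDerivAt_sin t)

section PartialDerivatives

variable {E : Type*} [NormedAddCommGroup E] [NormedSpace ℝ E] {g : ℝ × ℝ → E} {u v : ℝ} {g' : E}

theorem fderiv_apply_one_zero (hg : DifferentiableAt ℝ g (u, v))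
    (h : HasDerivAt (fun t => g (t, v)) g' u) : fderiv ℝ g (u, v) (1, 0) = g' :=
  (hg.hasFDerivAt.comp_hasDerivAt u ((hasDerivAt_id u).prodMk (hasDerivAt_const u v))).unique h

theorem fderiv_apply_zero_one (hg : DifferentiableAt ℝ g (u, v))
    (h : HasDerivAt (fun t => g (u, t)) g' v) : fderiv ℝ g (u, v) (0, 1) = g' :=
  (hg.hasFDerivAt.comp_hasDerivAt v ((hasDerivAt_const v u).prodMk (hasDerivAt_id v))).unique h

end PartialDerivatives

theorem stmt15
    (α : ℝ → ℝ × ℝ) (hα : ∀ u : ℝ, α u = (Real.cos u, Real.sin u))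
    (x y : ℝ × ℝ → ℝ × ℝ) (f : ℝ × ℝ → ℝ)
    (hx : ∀ u v : ℝ, x (u, v) = ((1 : ℝ) / 2) • (α u + α v))
    (hy : ∀ u v : ℝ, y (u, v) = ((1 : ℝ) / 2) • (α u - α v))
    (hf : ∀ u v : ℝ, f (u, v) = (v - u + Real.sin (u - v)) / 4) :
    ∀ u v : ℝ,
      x (u, v) = Real.cos ((u - v) / 2) •
        (Real.cos ((u + v) / 2), Real.sin ((u + v) / 2)) ∧
      y (u, v) = Real.sin ((u - v) / 2) •
        (-Real.sin ((u + v) / 2), Real.cos ((u + v) / 2)) ∧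
      fderiv ℝ f (u, v) (1, 0) = omega2 (fderiv ℝ x (u, v) (1, 0)) (y (u, v)) ∧
      fderiv ℝ f (u, v) (0, 1) = omega2 (fderiv ℝ x (u, v) (0, 1)) (y (u, v)) := by
  have hx' : x = fun p => (1 / 2 : ℝ) • ((cos p.1, sin p.1) + (cos p.2, sin p.2)) :=
    funext fun ⟨s, t⟩ => by simp only [hx, hα]
  have hf' : f = fun p => (p.2 - p.1 + sin (p.1 - p.2)) / 4 :=
    funext fun ⟨s, t⟩ => hf s t
  intro u v
  have hdx : DifferentiableAt ℝ x (u, v) := by rw [hx']; fun_prop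
  have hdf : DifferentiableAt ℝ f (u, v) := by rw [hf']; fun_prop
  have hyuv : y (u, v) = (1 / 2 : ℝ) • ((cos u, sin u) - (cos v, sin v)) := by rw [hy, hα, hα]
  refine ⟨by rw [hx, hα, hα, half_smul_add_cos_sin], by rw [hyuv, half_smul_sub_cos_sin], ?_, ?_⟩
  · have hfu : HasDerivAt (fun t => f (t, v)) ((cos (u - v) - 1) / 4) u := by
      rw [hf']
      exact ((((hasDerivAt_id' u).const_sub v).add ((hasDerivAt_id' u).sub_const v).sin).div_const
        4).congr_deriv (by ring)
    have hxu : HasDerivAt (fun t => x (t, v)) ((1 / 2 : ℝ) • (-sin u, cos u)) u := by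
      rw [hx']; exact ((hasDerivAt_cos_sin u).add_const (cos v, sin v)).fun_const_smul (1 / 2 : ℝ)
    rw [fderiv_apply_one_zero hdf hfu, fderiv_apply_one_zero hdx hxu, hyuv, omega2_smul_left,
      omega2_smul_right, omega2_tangent_chord, sub_self, cos_zero]
    ring
  · have hfv : HasDerivAt (fun t => f (u, t)) ((1 - cos (u - v)) / 4) v := by
      rw [hf']
      exact ((((hasDerivAt_id' v).sub_const u).add ((hasDerivAt_id' v).const_sub u).sin).div_const
        4).congr_deriv (by ring)
    have hxv : HasDerivAt (fun t => x (u, t)) ((1 / 2 : ℝ) • (-sin v, cos v)) v := by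
      rw [hx']; exact ((hasDerivAt_cos_sin v).const_add (cos u, sin u)).fun_const_smul (1 / 2 : ℝ)
    rw [fderiv_apply_zero_one hdf hfv, fderiv_apply_zero_one hdx hxv, hyuv, omega2_smul_left,
      omega2_smul_right, omega2_tangent_chord, sub_self, cos_zero, ← neg_sub u v, cos_neg]
    ring
end
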